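/- For every n ≥ 1 and every S ⊆ {0,…,n−1}, the Fourier–Walsh coefficients of Λ̃ and Λ satisfy the exact identity Λ̃̂(S) = (n/2 − |S|) Λ̂(S) + (1/2) Σ_{j ∈ S} Λ̂(S∖{j}) − (1/2) Σ_{j ∈ {0,…,n−1}∖S} Λ̂(S∪{j}). -/

import Mathlib

/-!
Write `Λ̃ = ∑_{j<n} D_j Λ` with `D_j g (y) = [y_j = 0] g(y + 2^j)` (`bitShift j g`). The
translation `y ↦ y + 2^j` maps `{y_j = 0}` onto `{x_j = 1}` without touching the other digits, so
for `j ∉ S` the `S`-coefficient of `D_j g` is that of `x ↦ x_j g(x)`, which is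
`(ĝ(S) - ĝ(S ∪ {j})) / 2` because `x_j = (1 - w_{j}(x)) / 2`. For `j ∈ S` the factor `1 - 2 x_j`
of `w_S` is `1` on the support of `D_j g`, so `S` may be replaced by `S ∖ {j}`. Summing over `j`
gives the identity, for every `g`.
-/

open Finset

/-- The von Mangoldt function on `ℕ` (with `Λ 0 = 0`). -/
noncomputable def vM : ℕ → ℝ := fun x => ArithmeticFunction.vonMangoldt x

/-- The `j`-th binary digit of `x`. -/
def bit (x j : ℕ) : ℕ := x / 2 ^ j % 2

/-- The Walsh function `w_S(x) = ∏_{j ∈ S} (1 - 2 x_j)`. -/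
noncomputable def walsh (S : Finset ℕ) (x : ℕ) : ℝ := ∏ j ∈ S, (1 - 2 * (bit x j : ℝ))

/-- Fourier–Walsh coefficient `ĝ(S) = 2^{-n} ∑_{x < 2^n} g(x) w_S(x)`. -/
noncomputable def fwCoeff (n : ℕ) (g : ℕ → ℝ) (S : Finset ℕ) : ℝ :=
  ((2 : ℝ) ^ n)⁻¹ * ∑ x ∈ range (2 ^ n), g x * walsh S x

/-- Expectation `E[g] = 2^{-n} ∑_{x < 2^n} g(x)`. -/
noncomputable def expect (n : ℕ) (g : ℕ → ℝ) : ℝ :=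
  ((2 : ℝ) ^ n)⁻¹ * ∑ x ∈ range (2 ^ n), g x

/-- Normalized inner product `⟨g, h⟩ = 2^{-n} ∑_{x < 2^n} g(x) h(x)`. -/
noncomputable def ip (n : ℕ) (g h : ℕ → ℝ) : ℝ :=
  ((2 : ℝ) ^ n)⁻¹ * ∑ x ∈ range (2 ^ n), g x * h x

/-- `f` is a Boolean function (with values `0` or `1`). -/
def IsBoolean (f : ℕ → ℝ) : Prop := ∀ x, f x = 0 ∨ f x = 1

/-- `f` is a monotone Boolean function on `{0,1}^n` (under binary-digit identification). -/
def IsMonotoneBool (n : ℕ) (f : ℕ → ℝ) : Prop :=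
  IsBoolean f ∧
    ∀ x y, x < 2 ^ n → y < 2 ^ n → (∀ j < n, bit x j ≤ bit y j) → f x ≤ f y

/-- The function `Λ̃(y) = ∑_{j < n, y_j = 0} Λ(y + 2^j)`. -/
noncomputable def vMtilde (n : ℕ) (y : ℕ) : ℝ :=
  ∑ j ∈ (range n).filter (fun j => bit y j = 0), vM (y + 2 ^ j)

section Bits

variable {x y j k n : ℕ}

lemma bit_eq_zero_or_one (x j : ℕ) : bit x j = 0 ∨ bit x j = 1 := Nat.mod_two_eq_zero_or_one _

lemma bit_add_two_pow_self (h : bit y j = 0) : bit (y + 2 ^ j) j = 1 := by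
  unfold bit at h ⊢
  rw [Nat.add_div_right _ (Nat.two_pow_pos j)]
  omega

lemma two_pow_le_of_bit_eq_one (h : bit x j = 1) : 2 ^ j ≤ x := by
  by_contra hx
  simp [bit, Nat.div_eq_of_lt (not_le.mp hx)] at h

lemma bit_sub_two_pow_self (h : bit x j = 1) : bit (x - 2 ^ j) j = 0 := by
  have hdiv : (x - 2 ^ j) / 2 ^ j = x / 2 ^ j - 1 := by simpa using Nat.sub_mul_div x (2 ^ j) 1
  unfold bit at h ⊢
  rw [hdiv]
  omega

lemma bit_add_two_pow_of_lt (hk : k < j) : bit (y + 2 ^ j) k = bit y k := by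
  have hpow : 2 ^ j = 2 ^ k * (2 * 2 ^ (j - k - 1)) := by
    rw [← pow_succ', ← pow_add]; congr 1; omega
  rw [bit, bit, hpow, Nat.add_mul_div_left _ _ (Nat.two_pow_pos k), Nat.add_mul_mod_self_left]

lemma add_two_pow_div_two_pow_succ (h : bit y j = 0) :
    (y + 2 ^ j) / 2 ^ (j + 1) = y / 2 ^ (j + 1) := by
  have hlow : y % 2 ^ (j + 1) < 2 ^ j := by
    rw [Nat.mod_pow_succ, ← bit, h, mul_zero, add_zero]
    exact Nat.mod_lt _ (Nat.two_pow_pos j)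
  have hy : y + 2 ^ j = (y % 2 ^ (j + 1) + 2 ^ j) + 2 ^ (j + 1) * (y / 2 ^ (j + 1)) := by
    have := Nat.mod_add_div y (2 ^ (j + 1)); omega
  have hsum : y % 2 ^ (j + 1) + 2 ^ j < 2 ^ (j + 1) := by
    have := pow_succ 2 j; omega
  rw [hy, Nat.add_mul_div_left _ _ (Nat.two_pow_pos _), Nat.div_eq_of_lt hsum, zero_add]

lemma bit_add_two_pow_of_gt (h : bit y j = 0) (hk : j < k) : bit (y + 2 ^ j) k = bit y k := by
  have hpow : 2 ^ k = 2 ^ (j + 1) * 2 ^ (k - (j + 1)) := by rw [← pow_add]; congr 1; omega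
  rw [bit, bit, hpow, ← Nat.div_div_eq_div_mul, ← Nat.div_div_eq_div_mul,
    add_two_pow_div_two_pow_succ h]

lemma bit_add_two_pow_of_ne (h : bit y j = 0) (hk : k ≠ j) : bit (y + 2 ^ j) k = bit y k :=
  hk.lt_or_gt.elim bit_add_two_pow_of_lt (bit_add_two_pow_of_gt h)

lemma add_two_pow_lt_two_pow (h : bit y j = 0) (hj : j < n) (hy : y < 2 ^ n) :
    y + 2 ^ j < 2 ^ n := by
  have hpow : 2 ^ n = 2 ^ (n - (j + 1)) * 2 ^ (j + 1) := by rw [← pow_add]; congr 1; omega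
  rw [hpow, ← Nat.div_lt_iff_lt_mul (Nat.two_pow_pos _), add_two_pow_div_two_pow_succ h,
    Nat.div_lt_iff_lt_mul (Nat.two_pow_pos _), ← hpow]
  exact hy

end Bits

section Walsh

variable {T : Finset ℕ} {y j : ℕ}

lemma walsh_insert (hT : j ∉ T) (x : ℕ) :
    walsh (insert j T) x = (1 - 2 * (bit x j : ℝ)) * walsh T x :=
  prod_insert hT

lemma walsh_add_two_pow (h : bit y j = 0) (hT : j ∉ T) : walsh T (y + 2 ^ j) = walsh T y :=
  prod_congr rfl fun k hk => by rw [bit_add_two_pow_of_ne h (ne_of_mem_of_not_mem hk hT)]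

lemma walsh_erase_of_bit_eq_zero (h : bit y j = 0) (T : Finset ℕ) :
    walsh (T.erase j) y = walsh T y :=
  prod_erase T (by rw [h]; norm_num)

end Walsh

lemma sum_filter_bit_eq_zero_add_two_pow {M : Type*} [AddCommMonoid M] {j n : ℕ} (hj : j < n)
    (F : ℕ → M) :
    ∑ y ∈ (range (2 ^ n)).filter (fun y => bit y j = 0), F (y + 2 ^ j)
      = ∑ x ∈ (range (2 ^ n)).filter (fun x => bit x j = 1), F x := by
  refine sum_nbij' (· + 2 ^ j) (· - 2 ^ j) ?_ ?_ ?_ ?_ fun _ _ => rfl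
  · simp only [mem_filter, mem_range]
    exact fun y ⟨hy, h⟩ => ⟨add_two_pow_lt_two_pow h hj hy, bit_add_two_pow_self h⟩
  · simp only [mem_filter, mem_range]
    exact fun x ⟨hx, h⟩ => ⟨(Nat.sub_le x _).trans_lt hx, bit_sub_two_pow_self h⟩
  · exact fun y _ => Nat.add_sub_cancel y _
  · exact fun x hx => Nat.sub_add_cancel (two_pow_le_of_bit_eq_one (mem_filter.mp hx).2)

lemma fwCoeff_sum {ι : Type*} (n : ℕ) (s : Finset ι) (g : ι → ℕ → ℝ) (S : Finset ℕ) :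
    fwCoeff n (∑ i ∈ s, g i) S = ∑ i ∈ s, fwCoeff n (g i) S := by
  simp only [fwCoeff, Finset.sum_apply, sum_mul, ← mul_sum]
  rw [sum_comm]

lemma fwCoeff_bit_mul (n : ℕ) (g : ℕ → ℝ) {j : ℕ} {T : Finset ℕ} (hT : j ∉ T) :
    fwCoeff n (fun x => bit x j * g x) T = (fwCoeff n g T - fwCoeff n g (insert j T)) / 2 := by
  rw [fwCoeff, fwCoeff, fwCoeff, ← mul_sub, ← sum_sub_distrib, mul_div_assoc, sum_div]
  refine congrArg _ (sum_congr rfl fun x _ => ?_)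
  rw [walsh_insert hT]
  ring

noncomputable def bitShift (j : ℕ) (g : ℕ → ℝ) (y : ℕ) : ℝ :=
  if bit y j = 0 then g (y + 2 ^ j) else 0

lemma fwCoeff_bitShift_eq_fwCoeff_bit_mul (g : ℕ → ℝ) {n j : ℕ} (hj : j < n) {T : Finset ℕ}
    (hT : j ∉ T) :
    fwCoeff n (bitShift j g) T = fwCoeff n (fun x => bit x j * g x) T := by
  unfold fwCoeff
  congr 1
  calc ∑ y ∈ range (2 ^ n), bitShift j g y * walsh T y
      = ∑ y ∈ (range (2 ^ n)).filter (fun y => bit y j = 0),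
          g (y + 2 ^ j) * walsh T (y + 2 ^ j) := by
        rw [sum_filter]
        refine sum_congr rfl fun y _ => ?_
        unfold bitShift
        split_ifs with h
        · rw [walsh_add_two_pow h hT]
        · exact zero_mul _
    _ = ∑ x ∈ (range (2 ^ n)).filter (fun x => bit x j = 1), g x * walsh T x :=
        sum_filter_bit_eq_zero_add_two_pow hj fun x => g x * walsh T x
    _ = ∑ x ∈ range (2 ^ n), bit x j * g x * walsh T x := by
        rw [sum_filter]
        refine sum_congr rfl fun x _ => ?_
        rcases bit_eq_zero_or_one x j with h | h <;> simp [h]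

lemma fwCoeff_bitShift_of_notMem (g : ℕ → ℝ) {n j : ℕ} (hj : j < n) {T : Finset ℕ}
    (hT : j ∉ T) :
    fwCoeff n (bitShift j g) T = (fwCoeff n g T - fwCoeff n g (insert j T)) / 2 := by
  rw [fwCoeff_bitShift_eq_fwCoeff_bit_mul g hj hT, fwCoeff_bit_mul n g hT]

lemma fwCoeff_bitShift_erase (n j : ℕ) (g : ℕ → ℝ) (T : Finset ℕ) :
    fwCoeff n (bitShift j g) (T.erase j) = fwCoeff n (bitShift j g) T := by
  unfold fwCoeff bitShift
  congr 1
  refine sum_congr rfl fun y _ => ?_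
  split_ifs with h
  · rw [walsh_erase_of_bit_eq_zero h]
  · simp

theorem fwCoeff_sum_bitShift (g : ℕ → ℝ) {n : ℕ} {S : Finset ℕ} (hS : S ⊆ range n) :
    fwCoeff n (∑ j ∈ range n, bitShift j g) S =
      ((n : ℝ) / 2 - (S.card : ℝ)) * fwCoeff n g S
        + (1 / 2) * ∑ j ∈ S, fwCoeff n g (S.erase j)
        - (1 / 2) * ∑ j ∈ (range n) \ S, fwCoeff n g (insert j S) := by
  have outside : ∀ j ∈ range n \ S,
      fwCoeff n (bitShift j g) S = (fwCoeff n g S - fwCoeff n g (insert j S)) / 2 :=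
    fun j hj => fwCoeff_bitShift_of_notMem g (mem_range.mp (mem_sdiff.mp hj).1)
      (mem_sdiff.mp hj).2
  have inside : ∀ j ∈ S,
      fwCoeff n (bitShift j g) S = (fwCoeff n g (S.erase j) - fwCoeff n g S) / 2 := fun j hj => by
    rw [← fwCoeff_bitShift_erase, fwCoeff_bitShift_of_notMem g (mem_range.mp (hS hj))
      (notMem_erase j S), insert_erase hj]
  have hcard : (((range n \ S).card : ℕ) : ℝ) = n - S.card := by
    rw [card_sdiff_of_subset hS, card_range, Nat.cast_sub (by simpa using card_le_card hS)]
  rw [fwCoeff_sum, ← sum_sdiff hS, sum_congr rfl outside, sum_congr rfl inside, ← sum_div,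
    ← sum_div, sum_sub_distrib, sum_sub_distrib, sum_const, sum_const, nsmul_eq_mul,
    nsmul_eq_mul, hcard]
  ring

lemma vMtilde_eq_sum_bitShift (n : ℕ) : vMtilde n = ∑ j ∈ range n, bitShift j vM := by
  funext y
  simp only [vMtilde, Finset.sum_apply, bitShift, sum_filter]

theorem vMtilde_fwCoeff_eq_general (n : ℕ) (S : Finset ℕ) (hS : S ⊆ range n) :
    fwCoeff n (vMtilde n) S =
      ((n : ℝ) / 2 - (S.card : ℝ)) * fwCoeff n vM S
        + (1 / 2) * ∑ j ∈ S, fwCoeff n vM (S.erase j)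
        - (1 / 2) * ∑ j ∈ (range n) \ S, fwCoeff n vM (insert j S) := by
  rw [vMtilde_eq_sum_bitShift]
  exact fwCoeff_sum_bitShift vM hS

/-- exact identity for the Fourier–Walsh coefficients of `Λ̃`. -/
theorem vMtilde_fwCoeff_eq (n : ℕ) (hn : 1 ≤ n) (S : Finset ℕ) (hS : S ⊆ range n) :
    fwCoeff n (vMtilde n) S =
      ((n : ℝ) / 2 - (S.card : ℝ)) * fwCoeff n vM S
        + (1 / 2) * ∑ j ∈ S, fwCoeff n vM (S.erase j)
        - (1 / 2) * ∑ j ∈ (range n) \ S, fwCoeff n vM (insert j S) :=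
  vMtilde_fwCoeff_eq_general n S hS
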